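/- arXiv:math/0305010 — 2 statements merged into one kernel-verified Lean document; each statement's English description precedes it below -/
import Mathlib

section
/- Under the risk-neutral log-normal model, the expected discounted call payoff equals the Black-Scholes formula: E[e^{−rT}(x·exp(σW_T − σ²T/2 + rT) − K)⁺] = x N(d₁) − K e^{−rT} N(d₀), where d₀ = (1/(σ√T))log(x e^{rT}/K) − σ√T/2 and d₁ = d₀ + σ√T. -/
open MeasureTheory ProbabilityTheory Real

/-- Standard normal cumulative distribution function. -/
noncomputable def stdNormalCDF (z : ℝ) : ℝ :=
  ∫ y in Set.Iic z, (Real.sqrt (2 * Real.pi))⁻¹ * Real.exp (-y ^ 2 / 2)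

/-! Writing `W_T = √T Z` with `Z` standard normal, the payoff is positive exactly on a half-line
`z > z₀`. There the standard normal density times the lognormal factor `exp (s z - s² / 2)` is
the normal density shifted by `s` (exponential tilting), so each of the two terms of the payoff
integrates to a Gaussian tail, i.e. to a value of `N`. -/

open Set
open scoped NNReal

lemma integral_Ioi_gaussianPDFReal (μ a : ℝ) :
    ∫ z in Ioi a, gaussianPDFReal μ 1 z = stdNormalCDF (μ - a) := by
  have hsymm : ∀ z, gaussianPDFReal μ 1 z = gaussianPDFReal 0 1 (μ - z) := fun z => by
    simp only [gaussianPDFReal, sub_zero]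
    rw [← neg_sub z μ, neg_sq]
  have hpre : Ici a = (μ - ·) ⁻¹' Iic (μ - a) := by rw [preimage_const_sub_Iic, sub_sub_cancel]
  simp_rw [← integral_Ici_eq_integral_Ioi, hsymm, hpre]
  rw [(volume.measurePreserving_sub_left μ).setIntegral_preimage_emb
    (measurableEmbedding_subLeft μ)]
  simp [stdNormalCDF, gaussianPDFReal]

lemma gaussianPDFReal_mul_exp (μ : ℝ) (v : ℝ≥0) (s z : ℝ) :
    gaussianPDFReal μ v z * exp (s * (z - μ) - v * s ^ 2 / 2)
      = gaussianPDFReal (μ + v * s) v z := by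
  rcases eq_or_ne v 0 with rfl | hv
  · simp
  have hv' : (v : ℝ) ≠ 0 := by exact_mod_cast hv
  rw [gaussianPDFReal, gaussianPDFReal, mul_assoc, ← exp_add]
  congr 2
  field_simp
  ring

lemma integral_comp_of_map_eq_gaussianReal {Ω : Type*} [MeasurableSpace Ω]
    {P : Measure Ω} {W : Ω → ℝ} {v : ℝ≥0} (hW : P.map W = gaussianReal 0 v) {g : ℝ → ℝ}
    (hg : Measurable g) :
    ∫ ω, g (W ω) ∂P = ∫ z, g (√v * z) ∂gaussianReal 0 1 := by
  have hv : gaussianReal 0 v = (gaussianReal 0 1).map (√v * ·) := by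
    rw [gaussianReal_map_const_mul, mul_zero]
    congr
    ext
    simp
  have hWm : AEMeasurable W P := aemeasurable_of_map_neZero (by rw [hW]; infer_instance)
  rw [← integral_map hWm hg.aestronglyMeasurable, hW, hv,
    integral_map (by fun_prop) hg.aestronglyMeasurable]

theorem integral_max_mul_exp_sub_gaussianReal {F K s : ℝ} (hF : 0 < F) (hK : 0 < K)
    (hs : 0 < s) :
    ∫ z, max (F * exp (s * z - s ^ 2 / 2) - K) 0 ∂gaussianReal 0 1
      = F * stdNormalCDF (s⁻¹ * log (F / K) - s / 2 + s)
        - K * stdNormalCDF (s⁻¹ * log (F / K) - s / 2) := by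
  set z₀ := s / 2 - log (F / K) / s with hz₀
  have hexercise : ∀ z, 0 < F * exp (s * z - s ^ 2 / 2) - K ↔ z₀ < z := fun z => by
    have hsz₀ : s * z₀ = s ^ 2 / 2 - log (F / K) := by rw [hz₀]; field_simp
    rw [sub_pos, ← div_lt_iff₀' hF, ← log_lt_iff_lt_exp (div_pos hK hF), ← inv_div, log_inv,
      ← mul_lt_mul_iff_right₀ hs (b := z₀), hsz₀]
    constructor <;> intro <;> linarith
  have htilt : ∀ z, gaussianPDFReal 0 1 z * exp (s * z - s ^ 2 / 2) = gaussianPDFReal s 1 z :=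
    fun z => by simpa using gaussianPDFReal_mul_exp 0 1 s z
  have hintegrand : ∀ z, gaussianPDFReal 0 1 z * max (F * exp (s * z - s ^ 2 / 2) - K) 0
      = (Ioi z₀).indicator (fun z => F * gaussianPDFReal s 1 z - K * gaussianPDFReal 0 1 z) z :=
    fun z => by
      by_cases hz : z ∈ Ioi z₀
      · rw [indicator_of_mem hz, max_eq_left ((hexercise z).2 hz).le, ← htilt]
        ring
      · rw [indicator_of_notMem hz, max_eq_right (not_lt.1 (mt (hexercise z).1 hz)), mul_zero]
  simp_rw [integral_gaussianReal_eq_integral_smul one_ne_zero, smul_eq_mul, hintegrand]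
  rw [integral_indicator measurableSet_Ioi, integral_sub, integral_const_mul, integral_const_mul,
    integral_Ioi_gaussianPDFReal, integral_Ioi_gaussianPDFReal]
  · rw [hz₀]
    ring_nf
  · exact ((integrable_gaussianPDFReal s 1).const_mul F).integrableOn
  · exact ((integrable_gaussianPDFReal 0 1).const_mul K).integrableOn

theorem bs_formula_as_expectation_general
    {Ω : Type*} [MeasureSpace Ω]
    (x K σ T r : ℝ) (hx : 0 < x) (hK : 0 < K) (hσ : 0 < σ) (hT : 0 < T)
    (W : Ω → ℝ) (hW : Measure.map W ℙ = gaussianReal 0 (Real.toNNReal T)) :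
    (∫ ω, Real.exp (-r * T) *
        max (x * Real.exp (σ * W ω - σ ^ 2 * T / 2 + r * T) - K) 0 ∂ℙ)
      = x * stdNormalCDF ((σ * Real.sqrt T)⁻¹ * Real.log (x * Real.exp (r * T) / K)
            - σ * Real.sqrt T / 2 + σ * Real.sqrt T)
        - K * Real.exp (-r * T) *
          stdNormalCDF ((σ * Real.sqrt T)⁻¹ * Real.log (x * Real.exp (r * T) / K)
            - σ * Real.sqrt T / 2) := by
  have hpayoff : ∀ z, x * exp (σ * (√T * z) - σ ^ 2 * T / 2 + r * T) - K
      = x * exp (r * T) * exp (σ * √T * z - (σ * √T) ^ 2 / 2) - K := fun z => by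
    rw [mul_assoc, ← exp_add, mul_pow, sq_sqrt hT.le]
    ring_nf
  rw [integral_comp_of_map_eq_gaussianReal hW (g := fun w =>
      exp (-r * T) * max (x * exp (σ * w - σ ^ 2 * T / 2 + r * T) - K) 0) (by fun_prop),
    Real.coe_toNNReal T hT.le]
  simp_rw [hpayoff]
  rw [integral_const_mul, integral_max_mul_exp_sub_gaussianReal (by positivity) hK (by positivity)]
  have hdisc : exp (-r * T) * exp (r * T) = 1 := by rw [← exp_add]; simp
  linear_combination (x * stdNormalCDF _) * hdisc

theorem bs_formula_as_expectation
    {Ω : Type*} [MeasureSpace Ω] [IsProbabilityMeasure (ℙ : Measure Ω)]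
    (x K σ T r : ℝ) (hx : 0 < x) (hK : 0 < K) (hσ : 0 < σ) (hT : 0 < T)
    (W : Ω → ℝ) (hW : Measure.map W ℙ = gaussianReal 0 (Real.toNNReal T)) :
    (∫ ω, Real.exp (-r * T) *
        max (x * Real.exp (σ * W ω - σ ^ 2 * T / 2 + r * T) - K) 0 ∂ℙ)
      = x * stdNormalCDF ((σ * Real.sqrt T)⁻¹ * Real.log (x * Real.exp (r * T) / K)
            - σ * Real.sqrt T / 2 + σ * Real.sqrt T)
        - K * Real.exp (-r * T) *
          stdNormalCDF ((σ * Real.sqrt T)⁻¹ * Real.log (x * Real.exp (r * T) / K)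
            - σ * Real.sqrt T / 2) :=
  bs_formula_as_expectation_general x K σ T r hx hK hσ hT W hW
end

section
/- Super-replication with unbounded volatility yields the concave envelope: for a payoff function h: ℝ₊ → ℝ of at most linear growth, the smallest concave function ĥ ≥ h satisfies ĥ(x₀) = sup{E_Q[h(X_T)] : Q a probability measure under which (X_t) is a nonnegative martingale with X₀ = x₀}, where the supremum over all laws of nonnegative integrable random variables X_T with E[X_T] = x₀ of E[h(X_T)] equals ĥ(x₀). -/
open MeasureTheory

/-- Supporting line for a concave function on `Ici 0` at an interior point. -/
lemma exists_support_line {f : ℝ → ℝ} (hf : ConcaveOn ℝ (Set.Ici 0) f) {x₀ : ℝ}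
    (hx₀ : 0 < x₀) : ∃ c : ℝ, ∀ x ∈ Set.Ici (0 : ℝ), f x ≤ f x₀ + c * (x - x₀) := by
  set A : Set ℝ := (fun y => (f y - f x₀) / (y - x₀)) '' Set.Ioi x₀ with hA
  have hAne : A.Nonempty := ⟨_, ⟨x₀ + 1, by simp, rfl⟩⟩
  -- every right slope is bounded above by any left slope
  have key : ∀ u ∈ Set.Ico (0 : ℝ) x₀, ∀ y ∈ Set.Ioi x₀,
      (f y - f x₀) / (y - x₀) ≤ (f x₀ - f u) / (x₀ - u) := by
    intro u hu y hy
    exact hf.slope_anti_adjacent hu.1 (le_trans hx₀.le (le_of_lt hy))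
      hu.2 hy
  have hAbdd : BddAbove A := by
    refine ⟨(f x₀ - f 0) / (x₀ - 0), ?_⟩
    rintro e ⟨y, hy, rfl⟩
    exact key 0 ⟨le_refl 0, hx₀⟩ y hy
  refine ⟨sSup A, ?_⟩
  intro x hx
  rcases lt_trichotomy x x₀ with hlt | heq | hgt
  · -- x < x₀ : sSup A ≤ slope x x₀
    have h1 : sSup A ≤ (f x₀ - f x) / (x₀ - x) := by
      apply csSup_le hAne
      rintro e ⟨y, hy, rfl⟩
      exact key x ⟨hx, hlt⟩ y hy
    have hpos : 0 < x₀ - x := by linarith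
    have h2 : sSup A * (x₀ - x) ≤ f x₀ - f x := by
      have := mul_le_mul_of_nonneg_right h1 hpos.le
      rwa [div_mul_cancel₀] at this
      exact hpos.ne'
    nlinarith [h2]
  · simp [heq]
  · -- x > x₀ : slope x₀ x ≤ sSup A
    have h1 : (f x - f x₀) / (x - x₀) ≤ sSup A :=
      le_csSup hAbdd ⟨x, hgt, rfl⟩
    have hpos : 0 < x - x₀ := by linarith
    have h2 : f x - f x₀ ≤ sSup A * (x - x₀) := by
      have := mul_le_mul_of_nonneg_right h1 hpos.le
      rwa [div_mul_cancel₀] at this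
      exact hpos.ne'
    linarith

/-- Combination of suprema. -/
lemma sSup_combo {A B : Set ℝ} (hA : A.Nonempty) (hB : B.Nonempty)
    (hAb : BddAbove A) (hBb : BddAbove B) {t s c : ℝ} (ht : 0 ≤ t) (hs : 0 ≤ s)
    (H : ∀ e₁ ∈ A, ∀ e₂ ∈ B, t * e₁ + s * e₂ ≤ c) :
    t * sSup A + s * sSup B ≤ c := by
  have step : ∀ e₁ ∈ A, t * e₁ + s * sSup B ≤ c := by
    intro e₁ he₁
    rcases hs.eq_or_lt with hs0 | hs0
    · obtain ⟨e₂, he₂⟩ := hB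
      have := H e₁ he₁ e₂ he₂
      simp only [← hs0, zero_mul] at this ⊢
      exact this
    · have : sSup B ≤ (c - t * e₁) / s := by
        apply csSup_le hB
        intro e₂ he₂
        rw [le_div_iff₀ hs0]
        have := H e₁ he₁ e₂ he₂
        linarith
      have := mul_le_mul_of_nonneg_left this hs
      rw [mul_div_cancel₀ _ hs0.ne'] at this
      linarith
  rcases ht.eq_or_lt with ht0 | ht0
  · obtain ⟨e₁, he₁⟩ := hA
    have := step e₁ he₁
    simp only [← ht0, zero_mul] at this ⊢
    exact this
  · have : sSup A ≤ (c - s * sSup B) / t := by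
      apply csSup_le hA
      intro e₁ he₁
      rw [le_div_iff₀ ht0]
      have := step e₁ he₁
      linarith
    have := mul_le_mul_of_nonneg_left this ht
    rw [mul_div_cancel₀ _ ht0.ne'] at this
    linarith

/-- The set of achievable expectations for mean `x`. -/
def ExpSet (h : ℝ → ℝ) (x : ℝ) : Set ℝ :=
  {e : ℝ | ∃ μ : Measure ℝ, IsProbabilityMeasure μ ∧
      μ (Set.Iio 0) = 0 ∧ Integrable (fun x => x) μ ∧ (∫ y, y ∂μ) = x ∧
      Integrable h μ ∧ e = ∫ y, h y ∂μ}

lemma dirac_mem_ExpSet (h : ℝ → ℝ) {x : ℝ} (hx : 0 ≤ x) : h x ∈ ExpSet h x := by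
  refine ⟨Measure.dirac x, inferInstance, ?_, ?_, ?_, ?_, ?_⟩
  · rw [Measure.dirac_apply' _ measurableSet_Iio]
    simp [Set.indicator_apply, not_lt.mpr hx]
  · exact (integrable_const x).congr (ae_eq_dirac (fun y : ℝ => y)).symm
  · exact integral_dirac _ x
  · exact (integrable_const (h x)).congr (ae_eq_dirac h).symm
  · exact (integral_dirac h x).symm

lemma ExpSet_bddAbove {h : ℝ → ℝ} {a b : ℝ} (hgrowth : ∀ x ≥ (0 : ℝ), h x ≤ a + b * x)
    {x : ℝ} : ∀ e ∈ ExpSet h x, e ≤ a + b * x := by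
  rintro e ⟨μ, hμprob, hμneg, hμint, hμmean, hhint, rfl⟩
  have hae : ∀ᵐ y ∂μ, 0 ≤ y := by
    rw [ae_iff]
    convert hμneg using 2
    ext y
    simp only [Set.mem_setOf_eq, Set.mem_Iio, not_le]
  have haeb : ∀ᵐ y ∂μ, h y ≤ a + b * y := by
    filter_upwards [hae] with y hy using hgrowth y hy
  have hintlin : Integrable (fun y => a + b * y) μ :=
    (integrable_const a).add (hμint.const_mul b)
  calc ∫ y, h y ∂μ ≤ ∫ y, a + b * y ∂μ := integral_mono_ae hhint hintlin haeb
    _ = a + b * x := by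
        rw [integral_add (integrable_const a) (hμint.const_mul b),
          integral_const, integral_const_mul, hμmean]
        simp [measure_univ]

lemma ExpSet_combo {h : ℝ → ℝ} {x y t s : ℝ} (ht : 0 ≤ t) (hs : 0 ≤ s) (hts : t + s = 1)
    {e₁ e₂ : ℝ} (he₁ : e₁ ∈ ExpSet h x) (he₂ : e₂ ∈ ExpSet h y) :
    t * e₁ + s * e₂ ∈ ExpSet h (t * x + s * y) := by
  obtain ⟨μ₁, hp₁, hn₁, hi₁, hm₁, hh₁, rfl⟩ := he₁
  obtain ⟨μ₂, hp₂, hn₂, hi₂, hm₂, hh₂, rfl⟩ := he₂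
  refine ⟨(ENNReal.ofReal t) • μ₁ + (ENNReal.ofReal s) • μ₂, ?_, ?_, ?_, ?_, ?_, ?_⟩
  · constructor
    simp only [Measure.add_apply, Measure.smul_apply, smul_eq_mul, measure_univ, mul_one]
    rw [← ENNReal.ofReal_add ht hs, hts, ENNReal.ofReal_one]
  · simp [hn₁, hn₂]
  · exact ((hi₁.smul_measure ENNReal.ofReal_ne_top).add_measure
      (hi₂.smul_measure ENNReal.ofReal_ne_top))
  · rw [integral_add_measure (hi₁.smul_measure ENNReal.ofReal_ne_top)
      (hi₂.smul_measure ENNReal.ofReal_ne_top), integral_smul_measure,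
      integral_smul_measure, ENNReal.toReal_ofReal ht, ENNReal.toReal_ofReal hs, hm₁, hm₂]
    simp [smul_eq_mul]
  · exact ((hh₁.smul_measure ENNReal.ofReal_ne_top).add_measure
      (hh₂.smul_measure ENNReal.ofReal_ne_top))
  · rw [integral_add_measure (hh₁.smul_measure ENNReal.ofReal_ne_top)
      (hh₂.smul_measure ENNReal.ofReal_ne_top), integral_smul_measure,
      integral_smul_measure, ENNReal.toReal_ofReal ht, ENNReal.toReal_ofReal hs]
    simp [smul_eq_mul]

theorem superreplication_concave_envelope
    (h hHat : ℝ → ℝ) (a b : ℝ)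
    (hgrowth : ∀ x ≥ (0 : ℝ), h x ≤ a + b * x)
    (husc : UpperSemicontinuousOn h (Set.Ici 0))
    (hconc : ConcaveOn ℝ (Set.Ici 0) hHat)
    (hmaj : ∀ x ≥ (0 : ℝ), h x ≤ hHat x)
    (hmin : ∀ g : ℝ → ℝ, ConcaveOn ℝ (Set.Ici 0) g → (∀ x ≥ (0 : ℝ), h x ≤ g x) →
      ∀ x ≥ (0 : ℝ), hHat x ≤ g x)
    (x₀ : ℝ) (hx₀ : 0 < x₀) :
    hHat x₀ = sSup {e : ℝ | ∃ μ : Measure ℝ, IsProbabilityMeasure μ ∧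
      μ (Set.Iio 0) = 0 ∧ Integrable (fun x => x) μ ∧ (∫ x, x ∂μ) = x₀ ∧
      Integrable h μ ∧ e = ∫ x, h x ∂μ} := by
  have hset : {e : ℝ | ∃ μ : Measure ℝ, IsProbabilityMeasure μ ∧
      μ (Set.Iio 0) = 0 ∧ Integrable (fun x => x) μ ∧ (∫ x, x ∂μ) = x₀ ∧
      Integrable h μ ∧ e = ∫ x, h x ∂μ} = ExpSet h x₀ := rfl
  rw [hset]
  apply le_antisymm
  · -- hHat x₀ ≤ sSup (ExpSet h x₀) via minimality applied to g := sSup ∘ ExpSet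
    set g : ℝ → ℝ := fun x => sSup (ExpSet h x) with hg
    have hgmaj : ∀ x ≥ (0 : ℝ), h x ≤ g x := fun x hx =>
      le_csSup ⟨a + b * x, fun e he => ExpSet_bddAbove hgrowth e he⟩ (dirac_mem_ExpSet h hx)
    have hgconc : ConcaveOn ℝ (Set.Ici 0) g := by
      refine ⟨convex_Ici 0, ?_⟩
      intro x hx y hy t s ht hs hts
      simp only [smul_eq_mul, hg]
      apply sSup_combo ⟨_, dirac_mem_ExpSet h hx⟩ ⟨_, dirac_mem_ExpSet h hy⟩
        ⟨a + b * x, fun e he => ExpSet_bddAbove hgrowth e he⟩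
        ⟨a + b * y, fun e he => ExpSet_bddAbove hgrowth e he⟩ ht hs
      intro e₁ he₁ e₂ he₂
      exact le_csSup ⟨a + b * (t * x + s * y),
        fun e he => ExpSet_bddAbove hgrowth e he⟩ (ExpSet_combo ht hs hts he₁ he₂)
    exact hmin g hgconc hgmaj x₀ hx₀.le
  · -- sSup (ExpSet h x₀) ≤ hHat x₀ via supporting line
    obtain ⟨c, hc⟩ := exists_support_line hconc hx₀
    apply csSup_le ⟨_, dirac_mem_ExpSet h hx₀.le⟩
    rintro e ⟨μ, hμprob, hμneg, hμint, hμmean, hhint, rfl⟩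
    have hae : ∀ᵐ y ∂μ, 0 ≤ y := by
      rw [ae_iff]
      convert hμneg using 2
      ext y
      simp only [Set.mem_setOf_eq, Set.mem_Iio, not_le]
    have haeb : ∀ᵐ y ∂μ, h y ≤ hHat x₀ + c * (y - x₀) := by
      filter_upwards [hae] with y hy
      exact le_trans (hmaj y hy) (hc y hy)
    have hintlin : Integrable (fun y => hHat x₀ + c * (y - x₀)) μ := by
      apply (integrable_const (hHat x₀)).add
      exact (hμint.sub (integrable_const x₀)).const_mul c
    calc ∫ y, h y ∂μ ≤ ∫ y, hHat x₀ + c * (y - x₀) ∂μ :=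
          integral_mono_ae hhint hintlin haeb
      _ = hHat x₀ := by
          have heq : (fun y => hHat x₀ + c * (y - x₀)) =
              fun y => (hHat x₀ - c * x₀) + c * y := by funext y; ring
          rw [heq, integral_add (integrable_const _) (hμint.const_mul c),
            integral_const, integral_const_mul, hμmean]
          simp [measure_univ]
end
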